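/- arXiv:1004.4919 — 2 statements merged into one kernel-verified Lean document; each statement's English description precedes it below -/
import Mathlib

section
/- Let U = [U₁ U₂] and A = UᵀU with blocks A₁₁ = U₁ᵀU₁ invertible. Suppose the cross approximation error satisfies ‖A − [A₁₁; A₂₁] A₁₁⁻¹ [A₁₁ A₁₂]‖₂ ≤ ε‖A‖₂ in spectral norm. Then there exists a matrix B such that ‖U − U₁Bᵀ‖₂ ≤ √ε · ‖U‖₂; specifically one may take Bᵀ = [I, A₁₁⁻¹A₁₂]. -/
open Matrix

/-- Matrix spectral norm (largest singular value), as the operator norm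
of the associated Euclidean linear map. -/
noncomputable def spec {m n : Type*} [Fintype m] [Fintype n] [DecidableEq n]
    (M : Matrix m n ℝ) : ℝ :=
  ‖LinearMap.toContinuousLinearMap (Matrix.toEuclideanLin M)‖

/-- Matrix Frobenius norm. -/
noncomputable def frobM {m n : Type*} [Fintype m] [Fintype n] (A : Matrix m n ℝ) : ℝ :=
  Real.sqrt (∑ i, ∑ j, (A i j) ^ 2)

/-- Frobenius norm of a 3-tensor. -/
noncomputable def frob3 {n₁ n₂ n₃ : Type*} [Fintype n₁] [Fintype n₂] [Fintype n₃]
    (T : n₁ → n₂ → n₃ → ℝ) : ℝ :=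
  Real.sqrt (∑ i, ∑ j, ∑ k, (T i j k) ^ 2)

/-- Spectral norm of a 3-tensor: sup of the trilinear form over unit vectors. -/
noncomputable def tspec {n₁ n₂ n₃ : Type*} [Fintype n₁] [Fintype n₂] [Fintype n₃]
    (A : n₁ → n₂ → n₃ → ℝ) : ℝ :=
  sSup {x | ∃ (u : n₁ → ℝ) (v : n₂ → ℝ) (w : n₃ → ℝ),
    (∑ i, (u i) ^ 2) = 1 ∧ (∑ j, (v j) ^ 2) = 1 ∧ (∑ k, (w k) ^ 2) = 1 ∧
    x = |∑ i, ∑ j, ∑ k, A i j k * u i * v j * w k|}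

/-!
With `Bᵀ = A₁₁⁻¹ U₁ᵀ U`, the error `E = U - U₁ Bᵀ` is the residual of the least-squares
projection of `U` onto the columns of `U₁`. It is orthogonal to `U₁`, so the cross terms in
`EᵀE` cancel and `EᵀE = UᵀU - UᵀU₁ A₁₁⁻¹ U₁ᵀU` is exactly the cross approximation error.
Hence `‖E‖₂² = ‖EᵀE‖₂ ≤ ε ‖UᵀU‖₂ = ε ‖U‖₂²`.
-/

open scoped Matrix.Norms.L2Operator

lemma spec_nonneg {m n : Type*} [Fintype m] [Fintype n] [DecidableEq n]
    (M : Matrix m n ℝ) : 0 ≤ spec M := norm_nonneg _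

lemma spec_eq_l2_opNorm {m n : Type*} [Fintype m] [Fintype n] [DecidableEq n]
    (M : Matrix m n ℝ) : spec M = ‖M‖ := rfl

lemma spec_transpose_mul_self {m n : Type*} [Fintype m] [Fintype n] [DecidableEq n]
    (M : Matrix m n ℝ) : spec (Mᵀ * M) = spec M ^ 2 := by
  rw [spec_eq_l2_opNorm, spec_eq_l2_opNorm, ← conjTranspose_eq_transpose_of_trivial,
    l2_opNorm_conjTranspose_mul_self, sq]

lemma transpose_mul_self_sub_proj {R m n k : Type*} [CommRing R] [Fintype m] [Fintype k]
    [DecidableEq k] {C : Matrix m k R} (hC : IsUnit (Cᵀ * C)) (U : Matrix m n R) :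
    (U - C * ((Cᵀ * C)⁻¹ * (Cᵀ * U)))ᵀ * (U - C * ((Cᵀ * C)⁻¹ * (Cᵀ * U))) =
      Uᵀ * U - Uᵀ * C * (Cᵀ * C)⁻¹ * (Cᵀ * U) := by
  set W := (Cᵀ * C)⁻¹ * (Cᵀ * U)
  have hCW : Cᵀ * (C * W) = Cᵀ * U := by
    rw [← Matrix.mul_assoc, Matrix.mul_nonsing_inv_cancel_left _ _ ((isUnit_iff_isUnit_det _).mp hC)]
  calc (U - C * W)ᵀ * (U - C * W)
      = Uᵀ * U - Uᵀ * (C * W) - Wᵀ * (Cᵀ * U - Cᵀ * (C * W)) := by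
        simp only [transpose_sub, transpose_mul, Matrix.sub_mul, Matrix.mul_sub, Matrix.mul_assoc]
        abel
    _ = Uᵀ * U - Uᵀ * C * (Cᵀ * C)⁻¹ * (Cᵀ * U) := by
        rw [hCW, sub_self, Matrix.mul_zero, sub_zero]
        simp only [W, Matrix.mul_assoc]

lemma fromCols_one_eq_inv_mul {R m n₁ n₂ : Type*} [CommRing R] [Fintype m] [Fintype n₁]
    [DecidableEq n₁] (U₁ : Matrix m n₁ R) (U₂ : Matrix m n₂ R) (h : IsUnit (U₁ᵀ * U₁)) :
    fromCols 1 ((U₁ᵀ * U₁)⁻¹ * (U₁ᵀ * U₂)) = (U₁ᵀ * U₁)⁻¹ * (U₁ᵀ * fromCols U₁ U₂) := by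
  rw [mul_fromCols, mul_fromCols, nonsing_inv_mul _ ((isUnit_iff_isUnit_det _).mp h)]

lemma le_sqrt_mul_of_sq_le_mul_sq {a b ε : ℝ} (ha : 0 ≤ a) (hb : 0 ≤ b) (h : a ^ 2 ≤ ε * b ^ 2) :
    a ≤ Real.sqrt ε * b := by
  simpa [Real.sqrt_mul' ε (sq_nonneg b), Real.sqrt_sq ha, Real.sqrt_sq hb] using
    Real.sqrt_le_sqrt h

theorem cross_approximation_of_gram_gives_low_rank_approximation_general
    {n k₁ k₂ : ℕ}
    (U₁ : Matrix (Fin n) (Fin k₁) ℝ) (U₂ : Matrix (Fin n) (Fin k₂) ℝ)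
    (ε : ℝ)
    (h11 : IsUnit (U₁ᵀ * U₁))
    (hcross : spec ((fromCols U₁ U₂)ᵀ * fromCols U₁ U₂ -
        fromRows (U₁ᵀ * U₁) (U₂ᵀ * U₁) * (U₁ᵀ * U₁)⁻¹ * fromCols (U₁ᵀ * U₁) (U₁ᵀ * U₂)) ≤
        ε * spec ((fromCols U₁ U₂)ᵀ * fromCols U₁ U₂)) :
    ∃ B : Matrix (Fin k₁ ⊕ Fin k₂) (Fin k₁) ℝ,
      Bᵀ = fromCols (1 : Matrix (Fin k₁) (Fin k₁) ℝ) ((U₁ᵀ * U₁)⁻¹ * (U₁ᵀ * U₂)) ∧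
      spec (fromCols U₁ U₂ - U₁ * Bᵀ) ≤ Real.sqrt ε * spec (fromCols U₁ U₂) := by
  set U := fromCols U₁ U₂
  refine ⟨(fromCols 1 ((U₁ᵀ * U₁)⁻¹ * (U₁ᵀ * U₂)))ᵀ, transpose_transpose _, ?_⟩
  have hrows : fromRows (U₁ᵀ * U₁) (U₂ᵀ * U₁) = Uᵀ * U₁ := by
    rw [transpose_fromCols, fromRows_mul]
  have hcols : fromCols (U₁ᵀ * U₁) (U₁ᵀ * U₂) = U₁ᵀ * U := (mul_fromCols _ _ _).symm
  rw [hrows, hcols, ← transpose_mul_self_sub_proj h11 U] at hcross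
  rw [transpose_transpose, fromCols_one_eq_inv_mul U₁ U₂ h11]
  refine le_sqrt_mul_of_sq_le_mul_sq (spec_nonneg _) (spec_nonneg _) ?_
  rwa [← spec_transpose_mul_self, ← spec_transpose_mul_self]

theorem cross_approximation_of_gram_gives_low_rank_approximation
    {n k₁ k₂ : ℕ}
    (U₁ : Matrix (Fin n) (Fin k₁) ℝ) (U₂ : Matrix (Fin n) (Fin k₂) ℝ)
    (ε : ℝ) (hε : 0 ≤ ε)
    (h11 : IsUnit (U₁ᵀ * U₁))
    (hcross : spec ((fromCols U₁ U₂)ᵀ * fromCols U₁ U₂ -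
        fromRows (U₁ᵀ * U₁) (U₂ᵀ * U₁) * (U₁ᵀ * U₁)⁻¹ * fromCols (U₁ᵀ * U₁) (U₁ᵀ * U₂)) ≤
        ε * spec ((fromCols U₁ U₂)ᵀ * fromCols U₁ U₂)) :
    ∃ B : Matrix (Fin k₁ ⊕ Fin k₂) (Fin k₁) ℝ,
      Bᵀ = fromCols (1 : Matrix (Fin k₁) (Fin k₁) ℝ) ((U₁ᵀ * U₁)⁻¹ * (U₁ᵀ * U₂)) ∧
      spec (fromCols U₁ U₂ - U₁ * Bᵀ) ≤ Real.sqrt ε * spec (fromCols U₁ U₂) :=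
  cross_approximation_of_gram_gives_low_rank_approximation_general U₁ U₂ ε h11 hcross
end

section
/- Let A be an n₁×n₂ matrix, and let I, J be index sets of equal size r with A[I,J] invertible. Then the cross approximation à = A[:,J](A[I,J])⁻¹A[I,:] agrees with A on all entries in the selected rows I and columns J: Ã[i,j] = A[i,j] whenever i ∈ I or j ∈ J. -/
open Matrix

theorem cross_approximation_exact_on_cross
    {n₁ n₂ r : ℕ}
    (A : Matrix (Fin n₁) (Fin n₂) ℝ)
    (I : Fin r → Fin n₁) (J : Fin r → Fin n₂)
    (hI : Function.Injective I) (hJ : Function.Injective J)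
    (hinv : IsUnit (A.submatrix I J))
    (i : Fin n₁) (j : Fin n₂)
    (hij : (∃ t, i = I t) ∨ (∃ t, j = J t)) :
    (A.submatrix id J * (A.submatrix I J)⁻¹ * A.submatrix I id) i j = A i j := by
  have hdet := (Matrix.isUnit_iff_isUnit_det _).mp hinv
  have hBinv : A.submatrix I J * (A.submatrix I J)⁻¹ = 1 := Matrix.mul_nonsing_inv _ hdet
  have hBinv' : (A.submatrix I J)⁻¹ * A.submatrix I J = 1 := Matrix.nonsing_inv_mul _ hdet
  rcases hij with ⟨t, rfl⟩ | ⟨t, rfl⟩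
  · have h : ∀ k, (A.submatrix id J * (A.submatrix I J)⁻¹) (I t) k
        = (1 : Matrix (Fin r) (Fin r) ℝ) t k := by
      intro k
      rw [← hBinv]
      simp [Matrix.mul_apply]
    rw [Matrix.mul_apply]
    simp only [h]
    simp [Matrix.one_apply]
  · have h : ∀ k, ((A.submatrix I J)⁻¹ * A.submatrix I id) k (J t)
        = (1 : Matrix (Fin r) (Fin r) ℝ) k t := by
      intro k
      rw [← hBinv']
      simp [Matrix.mul_apply]
    rw [Matrix.mul_assoc, Matrix.mul_apply]
    simp only [h]
    simp [Matrix.one_apply]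
end
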